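/- arXiv:1610.00425 — 7 statements merged into one kernel-verified Lean document; each statement's English description precedes it below -/
import Mathlib

section
/- A point (s₁,s₂,p) ∈ ℂ³ belongs to Γ₃ if and only if |p| ≤ 1 and there exists (c₁,c₂) ∈ Γ₂ such that s₁ = c₁ + conj(c₂)·p and s₂ = c₂ + conj(c₁)·p. -/
noncomputable section

/-- The closed symmetrized tridisc. -/
def Gamma3 : Set (ℂ × ℂ × ℂ) :=
  {s | ∃ z1 z2 z3 : ℂ, ‖z1‖ ≤ 1 ∧ ‖z2‖ ≤ 1 ∧ ‖z3‖ ≤ 1 ∧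
    s = (z1 + z2 + z3, z1 * z2 + z2 * z3 + z3 * z1, z1 * z2 * z3)}

/-- The closed symmetrized bidisc. -/
def Gamma2 : Set (ℂ × ℂ) :=
  {s | ∃ z1 z2 : ℂ, ‖z1‖ ≤ 1 ∧ ‖z2‖ ≤ 1 ∧ s = (z1 + z2, z1 * z2)}

variable {H : Type*} [NormedAddCommGroup H] [InnerProductSpace ℂ H] [CompleteSpace H]

/-- Evaluation of a polynomial in three variables on a triple of operators. -/
def opEval3 (S1 S2 P : H →L[ℂ] H) (q : MvPolynomial (Fin 3) ℂ) : H →L[ℂ] H :=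
  (AddMonoidAlgebra.coeff q).sum fun m c => c • (S1 ^ m 0 * S2 ^ m 1 * P ^ m 2)

/-- Evaluation of a polynomial in two variables on a pair of operators. -/
def opEval2 (S P : H →L[ℂ] H) (q : MvPolynomial (Fin 2) ℂ) : H →L[ℂ] H :=
  (AddMonoidAlgebra.coeff q).sum fun m c => c • (S ^ m 0 * P ^ m 1)

def IsGamma3Contraction (S1 S2 P : H →L[ℂ] H) : Prop :=
  Commute S1 S2 ∧ Commute S1 P ∧ Commute S2 P ∧
  ∀ q : MvPolynomial (Fin 3) ℂ,
    ‖opEval3 S1 S2 P q‖ ≤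
      ⨆ w ∈ Gamma3, ‖MvPolynomial.eval ![w.1, w.2.1, w.2.2] q‖

/-- `Γ₂` is a spectral set for the commuting pair `(S, P)`. -/
def IsGamma2Contraction (S P : H →L[ℂ] H) : Prop :=
  Commute S P ∧
  ∀ q : MvPolynomial (Fin 2) ℂ,
    ‖opEval2 S P q‖ ≤ ⨆ w ∈ Gamma2, ‖MvPolynomial.eval ![w.1, w.2] q‖

/-- The defect operator `D_P = (I - P*P)^(1/2)` of a contraction `P`. -/
def defectOp (P : H →L[ℂ] H) : H →L[ℂ] H := CFC.sqrt (1 - star P * P)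

/-- The defect space `𝒟_P`, the closure of the range of `D_P`. -/
def defectSpace (P : H →L[ℂ] H) : Submodule ℂ H :=
  (LinearMap.range (defectOp P : H →ₗ[ℂ] H)).topologicalClosure

/-- The numerical radius of a bounded operator. -/
def numRadius (A : H →L[ℂ] H) : ℝ :=
  ⨆ x : {x : H // ‖x‖ = 1}, ‖(inner ℂ (A x.1) x.1 : ℂ)‖

/-- A pair of operators is almost normal if they commute and have equal self-commutators. -/
def AlmostNormal (T1 T2 : H →L[ℂ] H) : Prop :=
  Commute T1 T2 ∧ star T1 * T1 - T1 * star T1 = star T2 * T2 - T2 * star T2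

/-- A `Γ₃`-isometry: a `Γ₃`-contraction whose last entry is an isometry. -/
def IsGamma3Isometry (T1 T2 V : H →L[ℂ] H) : Prop :=
  IsGamma3Contraction T1 T2 V ∧ ∀ x, ‖V x‖ = ‖x‖

/-- A `Γ₃`-isometric dilation of `(S1, S2, P)`, with `ι` the inclusion of `H` into the
dilation space `K`. -/
def IsGamma3IsometricDilation {K : Type*} [NormedAddCommGroup K] [InnerProductSpace ℂ K]
    [CompleteSpace K] (S1 S2 P : H →L[ℂ] H) (T1 T2 V : K →L[ℂ] K) (ι : H →ₗᵢ[ℂ] K) : Prop :=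
  IsGamma3Isometry T1 T2 V ∧
  ∀ m1 m2 n : ℕ,
    ContinuousLinearMap.adjoint ι.toContinuousLinearMap ∘L
      ((T1 ^ m1 * T2 ^ m2 * V ^ n) ∘L ι.toContinuousLinearMap) = S1 ^ m1 * S2 ^ m2 * P ^ n

/-!
A point lies in `Γ₃` (resp. `Γ₂`) exactly when its polynomial `z³ - s₁z² + s₂z - p`
(resp. `z² - c₁z + c₂`) has all its roots in the closed disc. Both directions compare such a
polynomial with `p` times a reflected one, through the Blaschke-factor inequality
`|conj w · z - 1| ≤ |z - w|` for `|w| ≤ 1 ≤ |z|`: at a root `z` outside the disc the two sides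
cannot balance. When `|p| < 1` the pair `(c₁, c₂)` is forced to be
`((s₁ - conj s₂ · p) / (1 - |p|²), (s₂ - conj s₁ · p) / (1 - |p|²))`; when `|p| = 1` every
`zᵢ` is unimodular and `(z₁ + z₂, z₁z₂)` works.
-/

open ComplexConjugate Polynomial

lemma norm_conj_mul_sub_one_le_norm_sub {w z : ℂ} (hw : ‖w‖ ≤ 1) (hz : 1 ≤ ‖z‖) :
    ‖conj w * z - 1‖ ≤ ‖z - w‖ := by
  have key : ‖z - w‖ ^ 2 - ‖conj w * z - 1‖ ^ 2 = (‖z‖ ^ 2 - 1) * (1 - ‖w‖ ^ 2) := by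
    simp only [Complex.sq_norm, Complex.normSq_apply, Complex.sub_re, Complex.sub_im,
      Complex.mul_re, Complex.mul_im, Complex.conj_re, Complex.conj_im, Complex.one_re,
      Complex.one_im]
    ring
  have : 0 ≤ (‖z‖ ^ 2 - 1) * (1 - ‖w‖ ^ 2) :=
    mul_nonneg (by nlinarith) (by nlinarith [norm_nonneg w])
  exact (pow_le_pow_iff_left₀ (norm_nonneg _) (norm_nonneg _) two_ne_zero).mp (by linarith)

lemma mem_gamma2_of_forall_root_norm_le {c1 c2 : ℂ}
    (h : ∀ z : ℂ, z ^ 2 - c1 * z + c2 = 0 → ‖z‖ ≤ 1) : (c1, c2) ∈ Gamma2 := by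
  obtain ⟨d, hd⟩ := IsAlgClosed.exists_pow_nat_eq (c1 ^ 2 - 4 * c2) two_pos
  refine ⟨(c1 + d) / 2, (c1 - d) / 2, h _ ?_, h _ ?_, ?_⟩
  · linear_combination hd / 4
  · linear_combination hd / 4
  · ext <;> dsimp only
    · ring
    · linear_combination hd / 4

lemma mem_gamma3_of_forall_root_norm_le {s1 s2 p : ℂ}
    (h : ∀ z : ℂ, z ^ 3 - s1 * z ^ 2 + s2 * z - p = 0 → ‖z‖ ≤ 1) : (s1, s2, p) ∈ Gamma3 := by
  have hdeg : (X ^ 3 - C s1 * X ^ 2 + C s2 * X - C p).degree = 3 := by compute_degree!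
  obtain ⟨z1, hz1⟩ := Complex.exists_root (f := X ^ 3 - C s1 * X ^ 2 + C s2 * X - C p)
    (by rw [hdeg]; norm_num)
  have hroot : z1 ^ 3 - s1 * z1 ^ 2 + s2 * z1 - p = 0 := by simpa using hz1
  obtain ⟨z2, z3, h2, h3, hc⟩ :=
    mem_gamma2_of_forall_root_norm_le (c1 := s1 - z1) (c2 := s2 - (s1 - z1) * z1)
      fun z hz => h z (by linear_combination (z - z1) * hz + hroot)
  obtain ⟨hsum, hprod⟩ := Prod.ext_iff.mp hc
  dsimp only at hsum hprod
  refine ⟨z1, z2, z3, h z1 hroot, h2, h3, ?_⟩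
  ext <;> dsimp only
  · linear_combination hsum
  · linear_combination hprod + z1 * hsum
  · linear_combination z1 * hprod - hroot

lemma eq_add_conj_mul_of_mul_eq {s1 s2 p c1 c2 : ℂ} (hD : 1 - conj p * p ≠ 0)
    (h1 : (1 - conj p * p) * c1 = s1 - conj s2 * p)
    (h2 : (1 - conj p * p) * c2 = s2 - conj s1 * p) :
    s1 = c1 + conj c2 * p ∧ s2 = c2 + conj c1 * p := by
  have h1' := congrArg conj h1
  have h2' := congrArg conj h2
  simp only [map_mul, map_sub, map_one, Complex.conj_conj] at h1' h2'
  constructor <;> refine mul_left_cancel₀ hD ?_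
  · linear_combination -h1 - p * h2'
  · linear_combination -h2 - p * h1'

lemma norm_mul_conj_mul_sub_one_le {w1 w2 z : ℂ} (hw1 : ‖w1‖ ≤ 1) (hw2 : ‖w2‖ ≤ 1)
    (hz : 1 ≤ ‖z‖) : ‖(conj w1 * z - 1) * (conj w2 * z - 1)‖ ≤ ‖(z - w1) * (z - w2)‖ := by
  rw [norm_mul, norm_mul]
  gcongr
  · exact norm_conj_mul_sub_one_le_norm_sub hw1 hz
  · exact norm_conj_mul_sub_one_le_norm_sub hw2 hz

lemma sub_ne_zero_of_norm_le_one_lt {w z : ℂ} (hw : ‖w‖ ≤ 1) (hz : 1 < ‖z‖) : z - w ≠ 0 :=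
  sub_ne_zero.mpr (ne_of_apply_ne norm (by linarith))

lemma exists_gamma2_of_norm_lt_one {z1 z2 z3 : ℂ} (h1 : ‖z1‖ ≤ 1) (h2 : ‖z2‖ ≤ 1)
    (h3 : ‖z3‖ ≤ 1) (hp : ‖z1 * z2 * z3‖ < 1) :
    ∃ c1 c2 : ℂ, (c1, c2) ∈ Gamma2 ∧
      z1 + z2 + z3 = c1 + conj c2 * (z1 * z2 * z3) ∧
      z1 * z2 + z2 * z3 + z3 * z1 = c2 + conj c1 * (z1 * z2 * z3) := by
  set p := z1 * z2 * z3
  set s1 := z1 + z2 + z3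
  set s2 := z1 * z2 + z2 * z3 + z3 * z1
  have hD : 1 - conj p * p ≠ 0 := by
    rw [Complex.conj_mul', sub_ne_zero, ne_comm]
    exact_mod_cast (pow_lt_one₀ (norm_nonneg p) hp two_ne_zero).ne
  obtain ⟨c1, hc1⟩ : ∃ c1, (1 - conj p * p) * c1 = s1 - conj s2 * p := ⟨_, mul_div_cancel₀ _ hD⟩
  obtain ⟨c2, hc2⟩ : ∃ c2, (1 - conj p * p) * c2 = s2 - conj s1 * p := ⟨_, mul_div_cancel₀ _ hD⟩
  refine ⟨c1, c2, ?_, eq_add_conj_mul_of_mul_eq hD hc1 hc2⟩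
  refine mem_gamma2_of_forall_root_norm_le fun z hz => not_lt.mp fun hz1 => ?_
  -- `∏ (z - zᵢ) - p ∏ (conj zᵢ z - 1) = (1 - |p|²) z (z² - c₁z + c₂)`
  have hfac : (z - z1) * (z - z2) * (z - z3) =
      p * ((conj z1 * z - 1) * (conj z2 * z - 1) * (conj z3 * z - 1)) := by
    simp only [p, s1, s2, map_add, map_mul] at hc1 hc2
    linear_combination (1 - conj z1 * conj z2 * conj z3 * (z1 * z2 * z3)) * z * hz
      + z ^ 2 * hc1 - z * hc2
  have hpos : 0 < ‖(z - z1) * (z - z2) * (z - z3)‖ :=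
    norm_pos_iff.mpr (mul_ne_zero (mul_ne_zero (sub_ne_zero_of_norm_le_one_lt h1 hz1)
      (sub_ne_zero_of_norm_le_one_lt h2 hz1)) (sub_ne_zero_of_norm_le_one_lt h3 hz1))
  refine lt_irrefl ‖(z - z1) * (z - z2) * (z - z3)‖ ?_
  calc ‖(z - z1) * (z - z2) * (z - z3)‖
      = ‖p‖ * ‖(conj z1 * z - 1) * (conj z2 * z - 1) * (conj z3 * z - 1)‖ := by
        rw [hfac, norm_mul]
    _ ≤ ‖p‖ * ‖(z - z1) * (z - z2) * (z - z3)‖ := by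
        rw [norm_mul _ (conj z3 * z - 1), norm_mul _ (z - z3)]
        gcongr
        · exact norm_mul_conj_mul_sub_one_le h1 h2 hz1.le
        · exact norm_conj_mul_sub_one_le_norm_sub h3 hz1.le
    _ < ‖(z - z1) * (z - z2) * (z - z3)‖ := mul_lt_of_lt_one_left hpos hp

lemma exists_gamma2_of_norm_eq_one {z1 z2 z3 : ℂ} (h1 : ‖z1‖ ≤ 1) (h2 : ‖z2‖ ≤ 1)
    (h3 : ‖z3‖ ≤ 1) (hp : ‖z1 * z2 * z3‖ = 1) :
    ∃ c1 c2 : ℂ, (c1, c2) ∈ Gamma2 ∧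
      z1 + z2 + z3 = c1 + conj c2 * (z1 * z2 * z3) ∧
      z1 * z2 + z2 * z3 + z3 * z1 = c2 + conj c1 * (z1 * z2 * z3) := by
  rw [norm_mul, norm_mul] at hp
  have h13 : ‖z1‖ * ‖z3‖ ≤ 1 := mul_le_one₀ h1 (norm_nonneg _) h3
  have h23 : ‖z2‖ * ‖z3‖ ≤ 1 := mul_le_one₀ h2 (norm_nonneg _) h3
  have hz1 : conj z1 * z1 = 1 := by
    rw [Complex.conj_mul', (by nlinarith [norm_nonneg z1] : ‖z1‖ = 1)]
    norm_num
  have hz2 : conj z2 * z2 = 1 := by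
    rw [Complex.conj_mul', (by nlinarith [norm_nonneg z2] : ‖z2‖ = 1)]
    norm_num
  refine ⟨z1 + z2, z1 * z2, ⟨z1, z2, h1, h2, rfl⟩, ?_, ?_⟩ <;>
    simp only [map_add, map_mul]
  · linear_combination (-z3 * (conj z2 * z2)) * hz1 - z3 * hz2
  · linear_combination (-z2 * z3) * hz1 - z1 * z3 * hz2

lemma mem_gamma3_of_mem_gamma2 {p c1 c2 : ℂ} (hp : ‖p‖ ≤ 1) (hc : (c1, c2) ∈ Gamma2) :
    (c1 + conj c2 * p, c2 + conj c1 * p, p) ∈ Gamma3 := by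
  obtain ⟨w1, w2, hw1, hw2, hc⟩ := hc
  obtain ⟨rfl, rfl⟩ := Prod.ext_iff.mp hc
  refine mem_gamma3_of_forall_root_norm_le fun z hz => not_lt.mp fun hz1 => ?_
  have hfac : z * ((z - w1) * (z - w2)) = p * ((conj w1 * z - 1) * (conj w2 * z - 1)) := by
    simp only [map_add, map_mul] at hz
    linear_combination hz
  have hpos : 0 < ‖(z - w1) * (z - w2)‖ := norm_pos_iff.mpr
    (mul_ne_zero (sub_ne_zero_of_norm_le_one_lt hw1 hz1) (sub_ne_zero_of_norm_le_one_lt hw2 hz1))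
  refine lt_irrefl ‖z * ((z - w1) * (z - w2))‖ ?_
  calc ‖z * ((z - w1) * (z - w2))‖
      = ‖p‖ * ‖(conj w1 * z - 1) * (conj w2 * z - 1)‖ := by rw [hfac, norm_mul]
    _ ≤ 1 * ‖(z - w1) * (z - w2)‖ := by gcongr; exact norm_mul_conj_mul_sub_one_le hw1 hw2 hz1.le
    _ < ‖z‖ * ‖(z - w1) * (z - w2)‖ := by gcongr
    _ = ‖z * ((z - w1) * (z - w2))‖ := (norm_mul _ _).symm

theorem mem_gamma3_iff_exists_gamma2 (s1 s2 p : ℂ) :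
    (s1, s2, p) ∈ Gamma3 ↔
      ‖p‖ ≤ 1 ∧ ∃ c1 c2 : ℂ, (c1, c2) ∈ Gamma2 ∧
        s1 = c1 + (starRingEnd ℂ) c2 * p ∧ s2 = c2 + (starRingEnd ℂ) c1 * p := by
  constructor
  · rintro ⟨z1, z2, z3, h1, h2, h3, hs⟩
    obtain ⟨rfl, rfl, rfl⟩ : s1 = _ ∧ s2 = _ ∧ p = _ := by simpa only [Prod.ext_iff] using hs
    have hp : ‖z1 * z2 * z3‖ ≤ 1 := by
      simpa only [norm_mul] using mul_le_one₀ (mul_le_one₀ h1 (norm_nonneg _) h2) (norm_nonneg _) h3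
    refine ⟨hp, ?_⟩
    rcases hp.lt_or_eq with hlt | heq
    · exact exists_gamma2_of_norm_lt_one h1 h2 h3 hlt
    · exact exists_gamma2_of_norm_eq_one h1 h2 h3 heq
  · rintro ⟨hp, c1, c2, hc, rfl, rfl⟩
    exact mem_gamma3_of_mem_gamma2 hp hc
end
end

section
/- If (s₁,s₂,p) ∈ Γ₃, then |s₁ − conj(s₂)·p| + |s₂ − conj(s₁)·p| ≤ 3(1 − |p|²). -/
/-! Write `s₁ = Σ zᵢ`, `s₂ = Σ zⱼ zₖ`, `p = z₁ z₂ z₃`. Both expressions on the left split into three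
terms, one for each factorisation `p = u v` with `u = zᵢ`, `v = zⱼ zₖ`:
`s₁ - s̄₂ p = Σ u (1 - |v|²)` and `s₂ - s̄₁ p = Σ v (1 - |u|²)`. For `x, y ∈ [0, 1]`,
`x (1 - y²) + y (1 - x²) ≤ 1 - x² y²` since the difference is `(1 - x)(1 - y)(1 - x y)`;
so each factorisation contributes at most `1 - |p|²`. -/

open ComplexConjugate

lemma mul_one_sub_sq_add_mul_one_sub_sq_le {x y : ℝ} (hx : x ≤ 1)
    (hy0 : 0 ≤ y) (hy1 : y ≤ 1) :
    x * (1 - y ^ 2) + y * (1 - x ^ 2) ≤ 1 - (x * y) ^ 2 := by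
  have hxy : x * y ≤ 1 := mul_le_one₀ hx hy0 hy1
  nlinarith [mul_nonneg (mul_nonneg (sub_nonneg.2 hx) (sub_nonneg.2 hy1)) (sub_nonneg.2 hxy)]

lemma Complex.norm_mul_one_sub_conj_mul_self (u : ℂ) {v : ℂ} (hv : ‖v‖ ≤ 1) :
    ‖u * (1 - conj v * v)‖ = ‖u‖ * (1 - ‖v‖ ^ 2) := by
  have hv2 : 0 ≤ 1 - ‖v‖ ^ 2 := by nlinarith [norm_nonneg v]
  rw [Complex.conj_mul', ← Complex.ofReal_pow, ← Complex.ofReal_one, ← Complex.ofReal_sub,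
    norm_mul, Complex.norm_real, Real.norm_of_nonneg hv2]

lemma Complex.norm_mul_defect_add_norm_mul_defect_le {u v : ℂ} (hu : ‖u‖ ≤ 1) (hv : ‖v‖ ≤ 1) :
    ‖u * (1 - conj v * v)‖ + ‖v * (1 - conj u * u)‖ ≤ 1 - ‖u * v‖ ^ 2 := by
  rw [norm_mul_one_sub_conj_mul_self _ hv, norm_mul_one_sub_conj_mul_self _ hu, norm_mul]
  exact mul_one_sub_sq_add_mul_one_sub_sq_le hu (norm_nonneg v) hv

lemma esymm_one_sub_conj_esymm_two_mul (z₁ z₂ z₃ : ℂ) :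
    (z₁ + z₂ + z₃) - conj (z₁ * z₂ + z₂ * z₃ + z₃ * z₁) * (z₁ * z₂ * z₃) =
      z₁ * (1 - conj (z₂ * z₃) * (z₂ * z₃)) + z₂ * (1 - conj (z₃ * z₁) * (z₃ * z₁)) +
        z₃ * (1 - conj (z₁ * z₂) * (z₁ * z₂)) := by
  simp only [map_add, map_mul]
  ring

lemma esymm_two_sub_conj_esymm_one_mul (z₁ z₂ z₃ : ℂ) :
    (z₁ * z₂ + z₂ * z₃ + z₃ * z₁) - conj (z₁ + z₂ + z₃) * (z₁ * z₂ * z₃) =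
      z₂ * z₃ * (1 - conj z₁ * z₁) + z₃ * z₁ * (1 - conj z₂ * z₂) +
        z₁ * z₂ * (1 - conj z₃ * z₃) := by
  simp only [map_add]
  ring

theorem gamma3_abs_inequality (s1 s2 p : ℂ) (h : (s1, s2, p) ∈ Gamma3) :
    ‖s1 - (starRingEnd ℂ) s2 * p‖ + ‖s2 - (starRingEnd ℂ) s1 * p‖ ≤ 3 * (1 - ‖p‖ ^ 2) := by
  obtain ⟨z₁, z₂, z₃, h₁, h₂, h₃, hs⟩ := h
  simp only [Prod.mk.injEq] at hs
  obtain ⟨rfl, rfl, rfl⟩ := hs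
  have norm_mul_le_one {u v : ℂ} (hu : ‖u‖ ≤ 1) (hv : ‖v‖ ≤ 1) : ‖u * v‖ ≤ 1 := by
    rw [norm_mul]; exact mul_le_one₀ hu (norm_nonneg v) hv
  have k₁ := Complex.norm_mul_defect_add_norm_mul_defect_le h₁ (norm_mul_le_one h₂ h₃)
  have k₂ := Complex.norm_mul_defect_add_norm_mul_defect_le h₂ (norm_mul_le_one h₃ h₁)
  have k₃ := Complex.norm_mul_defect_add_norm_mul_defect_le h₃ (norm_mul_le_one h₁ h₂)
  rw [show z₁ * (z₂ * z₃) = z₁ * z₂ * z₃ by ring] at k₁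
  rw [show z₂ * (z₃ * z₁) = z₁ * z₂ * z₃ by ring] at k₂
  rw [show z₃ * (z₁ * z₂) = z₁ * z₂ * z₃ by ring] at k₃
  rw [esymm_one_sub_conj_esymm_two_mul, esymm_two_sub_conj_esymm_one_mul]
  refine (add_le_add norm_add₃_le norm_add₃_le).trans ?_
  linarith
end

section
/- If (s₁,s₂,p) ∈ Γ₃, then for every real number k ≥ 3 and every α ∈ ℂ with |α| ≤ 1, one has |kα³p − α²s₂| ≤ |k − αs₁| and |kα³p − αs₁| ≤ |k − α²s₂|. -/
/-!
Scaling by `α` keeps the point in `Γ₃`, so one may take `α = 1` and write the point as the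
elementary symmetric functions of `a, b, c` in the closed disc. With `(s, p) = (b + c, b c)`
in `Γ₂`, both inequalities become `‖X a - Y‖ ≤ ‖A - B a‖` for coefficients affine in `s`
and `p`: `(A, B, X, Y) = (k - s, 1, k p - s, p)` and `(k - p, s, k p - 1, s)` respectively.
Such an inequality holds on the whole closed disc under three numerical conditions on
`A, B, X, Y`, and for `k ≥ 3` these follow from the inequalities `‖p‖ ≤ 1`,
`‖s‖ ≤ 1 + ‖p‖` and `‖s - s̄ p‖ ≤ 1 - ‖p‖²` valid on `Γ₂`.
-/

open ComplexConjugate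

theorem Complex.norm_mul_sub_le_norm_sub_mul {A B X Y u : ℂ} (hu : ‖u‖ ≤ 1)
    (hcross : 2 * ‖conj A * B - X * conj Y‖ ≤
      ‖A‖ ^ 2 + ‖B‖ ^ 2 - ‖X‖ ^ 2 - ‖Y‖ ^ 2)
    (hsum : ‖B‖ ^ 2 + ‖Y‖ ^ 2 ≤ ‖A‖ ^ 2 + ‖X‖ ^ 2) (hYA : ‖Y‖ ≤ ‖A‖) :
    ‖X * u - Y‖ ≤ ‖A - B * u‖ := by
  set c := conj A * B - X * conj Y
  have hexpand : ‖A - B * u‖ ^ 2 - ‖X * u - Y‖ ^ 2 =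
      (‖A‖ ^ 2 - ‖Y‖ ^ 2) + (‖B‖ ^ 2 - ‖X‖ ^ 2) * ‖u‖ ^ 2 - 2 * (c * u).re := by
    simp only [c, Complex.sq_norm, Complex.normSq_apply, Complex.sub_re, Complex.sub_im,
      Complex.mul_re, Complex.mul_im, Complex.conj_re, Complex.conj_im]
    ring
  have hre : (c * u).re ≤ ‖c‖ * ‖u‖ := (Complex.re_le_norm _).trans_eq (norm_mul _ _)
  have hr := norm_nonneg u
  -- with `r = ‖u‖`, the difference of squares is at least `(1 - r) * (P - Q * r)`, where
  -- `P = ‖A‖ ^ 2 - ‖Y‖ ^ 2` and `Q = ‖B‖ ^ 2 - ‖X‖ ^ 2` satisfy `0 ≤ P` and `Q ≤ P`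
  have hkey : 0 ≤ (1 - ‖u‖) * ((1 - ‖u‖) * (‖A‖ ^ 2 - ‖Y‖ ^ 2)
      + ‖u‖ * (‖A‖ ^ 2 + ‖X‖ ^ 2 - ‖B‖ ^ 2 - ‖Y‖ ^ 2)) := by
    have := pow_le_pow_left₀ (norm_nonneg Y) hYA 2
    apply mul_nonneg <;> [linarith; apply add_nonneg] <;> apply mul_nonneg <;> linarith
  refine le_of_pow_le_pow_left₀ two_ne_zero (norm_nonneg _) ?_
  nlinarith [mul_le_mul_of_nonneg_right hcross hr]

theorem two_mul_norm_ofReal_mul_sub_le {k t : ℝ} {w : ℂ} (hk : 3 ≤ k) (hw : ‖w‖ ≤ t) :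
    2 * ‖((k * t : ℝ) : ℂ) - w‖ ≤ (k ^ 2 + 1) * t - 2 * k * w.re := by
  have ht : 0 ≤ t := (norm_nonneg w).trans hw
  have hre : w.re ≤ t := (Complex.re_le_norm w).trans hw
  have hw2 : w.re ^ 2 + w.im ^ 2 ≤ t ^ 2 := by
    have := pow_le_pow_left₀ (norm_nonneg w) hw 2
    rw [Complex.sq_norm, Complex.normSq_apply] at this
    linarith
  have hnorm : ‖((k * t : ℝ) : ℂ) - w‖ ^ 2 = (k * t - w.re) ^ 2 + w.im ^ 2 := by
    simp only [Complex.sq_norm, Complex.normSq_apply, Complex.sub_re, Complex.sub_im,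
      Complex.ofReal_re, Complex.ofReal_im]
    ring
  have hrhs : 0 ≤ (k ^ 2 + 1) * t - 2 * k * w.re := by
    nlinarith [mul_le_mul_of_nonneg_left hre (by linarith : (0:ℝ) ≤ 2 * k),
      mul_nonneg (sq_nonneg (k - 1)) ht]
  have hsq : 4 * ((k * t - w.re) ^ 2 + w.im ^ 2) ≤ ((k ^ 2 + 1) * t - 2 * k * w.re) ^ 2 := by
    have hslack : 0 ≤ (k ^ 2 - 3) * t - 2 * k * w.re := by
      nlinarith [mul_nonneg (mul_nonneg (by linarith : (0:ℝ) ≤ k - 3)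
          (by linarith : (0:ℝ) ≤ k + 1)) ht,
        mul_le_mul_of_nonneg_left hre (by linarith : (0:ℝ) ≤ 2 * k)]
    nlinarith [mul_nonneg hslack hrhs]
  nlinarith [norm_nonneg (((k * t : ℝ) : ℂ) - w)]

theorem one_add_sq_le_sq_add_sq {a m x : ℝ} (hm0 : 0 ≤ m) (ha : 2 - m ≤ a)
    (hx : m * a - (1 - m ^ 2) ≤ x) : 1 + m ^ 2 ≤ a ^ 2 + x ^ 2 := by
  -- `(2 - m) ^ 2 ≥ 1 + m ^ 2` for `m ≤ 3 / 4`; beyond that `x ≥ 2 m - 1 > 0`, and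
  -- `(2 - m) ^ 2 + (2 m - 1) ^ 2 - (1 + m ^ 2) = 4 (1 - m) ^ 2`
  rcases le_or_gt m (3 / 4) with hm | hm
  · nlinarith [sq_nonneg x, sq_nonneg (a - (2 - m))]
  · nlinarith [sq_nonneg (x - (2 * m - 1)), sq_nonneg (a - (2 - m)), sq_nonneg (m - 1),
      mul_nonneg (mul_nonneg hm0 (by linarith : (0:ℝ) ≤ a - (2 - m)))
        (by linarith : (0:ℝ) ≤ 2 * m - 1)]

section

variable {s p : ℂ}

theorem norm_snd_le_one_of_mem_Gamma2 (h : (s, p) ∈ Gamma2) : ‖p‖ ≤ 1 := by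
  obtain ⟨b, c, hb, hc, h⟩ := h
  obtain ⟨-, rfl⟩ := Prod.mk.inj h
  rw [norm_mul]
  exact mul_le_one₀ hb (norm_nonneg c) hc

theorem norm_fst_le_of_mem_Gamma2 (h : (s, p) ∈ Gamma2) : ‖s‖ ≤ 1 + ‖p‖ := by
  obtain ⟨b, c, hb, hc, h⟩ := h
  obtain ⟨rfl, rfl⟩ := Prod.mk.inj h
  rw [norm_mul]
  nlinarith [norm_add_le b c, mul_nonneg (sub_nonneg.2 hb) (sub_nonneg.2 hc)]

theorem norm_sub_conj_mul_le_of_mem_Gamma2 (h : (s, p) ∈ Gamma2) :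
    ‖s - conj s * p‖ ≤ 1 - ‖p‖ ^ 2 := by
  obtain ⟨b, c, hb, hc, h⟩ := h
  obtain ⟨rfl, rfl⟩ := Prod.mk.inj h
  have hid : b + c - conj (b + c) * (b * c) =
      b * ((1 - ‖c‖ ^ 2 : ℝ) : ℂ) + c * ((1 - ‖b‖ ^ 2 : ℝ) : ℂ) := by
    rw [map_add]
    push_cast
    linear_combination (-c) * Complex.mul_conj' b - b * Complex.mul_conj' c
  have hb0 := norm_nonneg b
  have hc0 := norm_nonneg c
  calc ‖b + c - conj (b + c) * (b * c)‖
      ≤ ‖b‖ * (1 - ‖c‖ ^ 2) + ‖c‖ * (1 - ‖b‖ ^ 2) := by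
        rw [hid]
        refine (norm_add_le _ _).trans_eq ?_
        rw [norm_mul, norm_mul, Complex.norm_of_nonneg (by nlinarith),
          Complex.norm_of_nonneg (by nlinarith)]
    _ ≤ 1 - ‖b * c‖ ^ 2 := by
        rw [norm_mul]
        nlinarith [mul_nonneg (mul_nonneg (sub_nonneg.2 hb) (sub_nonneg.2 hc))
          (sub_nonneg.2 (mul_le_one₀ hb hc0 hc))]

theorem norm_mul_sub_le_norm_sub_of_mem_Gamma2 (h : (s, p) ∈ Gamma2) {k : ℝ} (hk : 3 ≤ k)
    {u : ℂ} (hu : ‖u‖ ≤ 1) : ‖(k * p - s) * u - p‖ ≤ ‖k - s - u‖ := by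
  have hp := norm_snd_le_one_of_mem_Gamma2 h
  have hW := norm_sub_conj_mul_le_of_mem_Gamma2 h
  have hks : 2 - ‖p‖ ≤ ‖k - s‖ := by
    have := norm_sub_norm_le (k : ℂ) s
    rw [Complex.norm_of_nonneg (by linarith)] at this
    linarith [norm_fst_le_of_mem_Gamma2 h]
  have hkps : ‖p‖ * ‖k - s‖ - (1 - ‖p‖ ^ 2) ≤ ‖k * p - s‖ := by
    have hid : (k : ℂ) * p - s = p * conj (k - s) - (s - conj s * p) := by
      simp only [map_sub, Complex.conj_ofReal]
      ring
    have := norm_sub_norm_le (p * conj ((k : ℂ) - s)) (s - conj s * p)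
    rw [← hid, norm_mul, RCLike.norm_conj] at this
    linarith
  have hcross : conj ((k : ℂ) - s) * 1 - (k * p - s) * conj p =
      ((k * (1 - ‖p‖ ^ 2) : ℝ) : ℂ) - conj (s - conj s * p) := by
    simp only [map_sub, map_mul, Complex.conj_ofReal, Complex.conj_conj]
    push_cast
    linear_combination (-(k : ℂ)) * Complex.mul_conj' p
  have hdiff : ‖(k : ℂ) - s‖ ^ 2 + ‖(1 : ℂ)‖ ^ 2 - ‖(k : ℂ) * p - s‖ ^ 2 - ‖p‖ ^ 2 =
      (k ^ 2 + 1) * (1 - ‖p‖ ^ 2) - 2 * k * (conj (s - conj s * p)).re := by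
    simp only [Complex.sq_norm, Complex.normSq_apply, Complex.sub_re, Complex.sub_im,
      Complex.mul_re, Complex.mul_im, Complex.conj_re, Complex.conj_im, Complex.ofReal_re,
      Complex.ofReal_im, Complex.one_re, Complex.one_im]
    ring
  have key := Complex.norm_mul_sub_le_norm_sub_mul (A := k - s) (B := 1) (X := k * p - s)
    (Y := p) hu ?_ ?_ (by linarith)
  · rwa [one_mul] at key
  · rw [hcross, hdiff]
    exact two_mul_norm_ofReal_mul_sub_le hk ((RCLike.norm_conj _).trans_le hW)
  · rw [norm_one, one_pow]
    exact one_add_sq_le_sq_add_sq (norm_nonneg p) hks hkps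

theorem norm_mul_sub_one_mul_sub_le_of_mem_Gamma2 (h : (s, p) ∈ Gamma2) {k : ℝ} (hk : 3 ≤ k)
    {u : ℂ} (hu : ‖u‖ ≤ 1) : ‖(k * p - 1) * u - s‖ ≤ ‖k - p - s * u‖ := by
  have hp := norm_snd_le_one_of_mem_Gamma2 h
  have hs := norm_fst_le_of_mem_Gamma2 h
  have hW := norm_sub_conj_mul_le_of_mem_Gamma2 h
  have hkp : k - 1 ≤ ‖k - p‖ := by
    have := norm_sub_norm_le (k : ℂ) p
    rw [Complex.norm_of_nonneg (by linarith)] at this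
    linarith
  have hcross : conj ((k : ℂ) - p) * s - (k * p - 1) * conj s =
      k * (s - conj s * p) + conj (s - conj s * p) := by
    simp only [map_sub, map_mul, Complex.conj_ofReal, Complex.conj_conj]
    ring
  have hdiff : ‖(k : ℂ) - p‖ ^ 2 + ‖s‖ ^ 2 - ‖(k : ℂ) * p - 1‖ ^ 2 - ‖s‖ ^ 2 =
      (k ^ 2 - 1) * (1 - ‖p‖ ^ 2) := by
    simp only [Complex.sq_norm, Complex.normSq_apply, Complex.sub_re, Complex.sub_im,
      Complex.mul_re, Complex.mul_im, Complex.ofReal_re, Complex.ofReal_im, Complex.one_re,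
      Complex.one_im]
    ring
  have hsumsq : ‖(k : ℂ) - p‖ ^ 2 + ‖(k : ℂ) * p - 1‖ ^ 2 =
      (k ^ 2 + 1) * (1 + ‖p‖ ^ 2) - 4 * k * p.re := by
    simp only [Complex.sq_norm, Complex.normSq_apply, Complex.sub_re, Complex.sub_im,
      Complex.mul_re, Complex.mul_im, Complex.ofReal_re, Complex.ofReal_im, Complex.one_re,
      Complex.one_im]
    ring
  apply Complex.norm_mul_sub_le_norm_sub_mul hu
  · rw [hcross, hdiff]
    have hW0 := (norm_nonneg _).trans hW
    calc 2 * ‖k * (s - conj s * p) + conj (s - conj s * p)‖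
        ≤ 2 * (k + 1) * ‖s - conj s * p‖ := by
          have := norm_add_le ((k : ℂ) * (s - conj s * p)) (conj (s - conj s * p))
          rw [norm_mul, RCLike.norm_conj, Complex.norm_of_nonneg (by linarith)] at this
          linarith
      _ ≤ (k ^ 2 - 1) * (1 - ‖p‖ ^ 2) := by
          nlinarith [mul_le_mul_of_nonneg_left hW (by linarith : (0:ℝ) ≤ 2 * (k + 1)),
            mul_nonneg (mul_nonneg (by linarith : (0:ℝ) ≤ k + 1)
              (by linarith : (0:ℝ) ≤ k - 3)) hW0]
  · have hre := Complex.re_le_norm p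
    have hp0 := norm_nonneg p
    have := pow_le_pow_left₀ (norm_nonneg s) hs 2
    nlinarith [mul_nonneg (by linarith : (0:ℝ) ≤ k + 1) (sq_nonneg (1 - ‖p‖)),
      mul_nonneg (mul_nonneg (by linarith : (0:ℝ) ≤ k + 1) (by linarith : (0:ℝ) ≤ k - 3))
        (by positivity : (0:ℝ) ≤ 1 + ‖p‖ ^ 2)]
  · linarith

end

theorem gamma3_pencil_scalar_inequalities (s1 s2 p : ℂ) (h : (s1, s2, p) ∈ Gamma3)
    (k : ℝ) (hk : 3 ≤ k) (α : ℂ) (hα : ‖α‖ ≤ 1) :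
    ‖(k : ℂ) * α ^ 3 * p - α ^ 2 * s2‖ ≤ ‖(k : ℂ) - α * s1‖ ∧
    ‖(k : ℂ) * α ^ 3 * p - α * s1‖ ≤ ‖(k : ℂ) - α ^ 2 * s2‖ := by
  obtain ⟨z1, z2, z3, h1, h2, h3, h⟩ := h
  obtain ⟨rfl, rfl, rfl⟩ : s1 = _ ∧ s2 = _ ∧ p = _ := by simpa only [Prod.mk.injEq] using h
  have hscale {z : ℂ} (hz : ‖z‖ ≤ 1) : ‖α * z‖ ≤ 1 := by
    rw [norm_mul]
    exact mul_le_one₀ hα (norm_nonneg z) hz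
  have hmem : (α * z2 + α * z3, α * z2 * (α * z3)) ∈ Gamma2 :=
    ⟨_, _, hscale h2, hscale h3, rfl⟩
  constructor
  · convert norm_mul_sub_le_norm_sub_of_mem_Gamma2 hmem hk (hscale h1) using 2 <;> ring
  · convert norm_mul_sub_one_mul_sub_le_of_mem_Gamma2 hmem hk (hscale h1) using 2 <;> ring
end

section
/- (Positivity of the operator pencils) Let (S₁,S₂,P) be a Γ₃-contraction on a complex Hilbert space H. Then for every real number k ≥ 3 and every α ∈ ℂ with |α| ≤ 1, the operators (kI − αS₁)*(kI − αS₁) − (kα³P − α²S₂)*(kα³P − α²S₂) and (kI − α²S₂)*(kI − α²S₂) − (kα³P − αS₁)*(kα³P − αS₁) are positive (self-adjoint with nonnegative quadratic form). -/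
/-!
For `k > 3` both pencils reduce to scalar inequalities on `Γ₃`: writing `eᵢ` for the elementary
symmetric functions of `αz₁, αz₂, αz₃`, one has `|k e₃ - e₂| ≤ |k - e₁|` and
`|k e₃ - e₁| ≤ |k - e₂|`. Both are equalities on the torus, so the maximum modulus principle in
each variable gives them on the closed tridisc. Since `‖Sᵢ‖ ≤ 3 < k`, the operator `k - β Sᵢ` is
invertible and the rational function `(k δ w₃ - γ wⱼ) / (k - β wᵢ)` is a uniform limit on `Γ₃` of
polynomials, so the spectral set property gives `‖(k δ P - γ Sⱼ) x‖ ≤ ‖(k - β Sᵢ) x‖`. This norm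
domination is the positivity of the pencil; the case `k = 3` follows by letting `k` decrease to `3`.
-/

open Metric in
theorem Complex.norm_le_norm_of_le_on_circle {F G : ℂ → ℂ} (hF : Differentiable ℂ F)
    (hG : Differentiable ℂ G) (hG0 : ∀ z : ℂ, ‖z‖ ≤ 1 → G z ≠ 0)
    (hFG : ∀ z : ℂ, ‖z‖ = 1 → ‖F z‖ ≤ ‖G z‖) {z : ℂ} (hz : ‖z‖ ≤ 1) : ‖F z‖ ≤ ‖G z‖ := by
  have hG0' : ∀ w ∈ closedBall (0 : ℂ) 1, G w ≠ 0 := fun w hw => hG0 w (by simpa using hw)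
  have hquot : DiffContOnCl ℂ (fun w => F w / G w) (ball 0 1) :=
    ⟨hF.differentiableOn.div hG.differentiableOn fun w hw => hG0' w (ball_subset_closedBall hw),
      by
        rw [closure_ball 0 one_ne_zero]
        exact hF.continuous.continuousOn.div hG.continuous.continuousOn hG0'⟩
  have hle : ‖F z / G z‖ ≤ 1 := by
    refine Complex.norm_le_of_forall_mem_frontier_norm_le isBounded_ball hquot (fun w hw => ?_)
      (by rw [closure_ball 0 one_ne_zero]; simpa using hz)
    rw [frontier_ball 0 one_ne_zero, mem_sphere_zero_iff_norm] at hw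
    rw [norm_div]
    exact div_le_one_of_le₀ (hFG w hw) (norm_nonneg _)
  rwa [norm_div, div_le_one (norm_pos_iff.2 (hG0 z hz))] at hle

theorem Complex.norm_le_norm_of_le_on_torus {F G : ℂ → ℂ → ℂ → ℂ}
    (hF₁ : ∀ b c, Differentiable ℂ fun z => F z b c)
    (hF₂ : ∀ a c, Differentiable ℂ fun z => F a z c) (hF₃ : ∀ a b, Differentiable ℂ (F a b))
    (hG₁ : ∀ b c, Differentiable ℂ fun z => G z b c)
    (hG₂ : ∀ a c, Differentiable ℂ fun z => G a z c) (hG₃ : ∀ a b, Differentiable ℂ (G a b))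
    (hG0 : ∀ a b c : ℂ, ‖a‖ ≤ 1 → ‖b‖ ≤ 1 → ‖c‖ ≤ 1 → G a b c ≠ 0)
    (hFG : ∀ a b c : ℂ, ‖a‖ = 1 → ‖b‖ = 1 → ‖c‖ = 1 → ‖F a b c‖ ≤ ‖G a b c‖)
    {a b c : ℂ} (ha : ‖a‖ ≤ 1) (hb : ‖b‖ ≤ 1) (hc : ‖c‖ ≤ 1) : ‖F a b c‖ ≤ ‖G a b c‖ := by
  have h₃ : ∀ a b c : ℂ, ‖a‖ = 1 → ‖b‖ = 1 → ‖c‖ ≤ 1 → ‖F a b c‖ ≤ ‖G a b c‖ :=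
    fun a b c ha hb hc => norm_le_norm_of_le_on_circle (hF₃ a b) (hG₃ a b)
      (fun w hw => hG0 a b w ha.le hb.le hw) (fun w hw => hFG a b w ha hb hw) hc
  have h₂ : ∀ a b c : ℂ, ‖a‖ = 1 → ‖b‖ ≤ 1 → ‖c‖ ≤ 1 → ‖F a b c‖ ≤ ‖G a b c‖ :=
    fun a b c ha hb hc => norm_le_norm_of_le_on_circle (hF₂ a c) (hG₂ a c)
      (fun w hw => hG0 a w c ha.le hw hc) (fun w hw => h₃ a w c ha hw hc) hb
  exact norm_le_norm_of_le_on_circle (hF₁ b c) (hG₁ b c) (fun w hw => hG0 w b c hw hb hc)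
    (fun w hw => h₂ w b c hw hb hc) ha

theorem norm_elementarySymmetric_le {z₁ z₂ z₃ : ℂ} (h₁ : ‖z₁‖ ≤ 1) (h₂ : ‖z₂‖ ≤ 1)
    (h₃ : ‖z₃‖ ≤ 1) :
    ‖z₁ + z₂ + z₃‖ ≤ 3 ∧ ‖z₁ * z₂ + z₂ * z₃ + z₃ * z₁‖ ≤ 3 ∧ ‖z₁ * z₂ * z₃‖ ≤ 1 := by
  have n₁ := norm_nonneg z₁
  have n₂ := norm_nonneg z₂
  have n₃ := norm_nonneg z₃
  refine ⟨?_, ?_, ?_⟩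
  · calc ‖z₁ + z₂ + z₃‖ ≤ ‖z₁‖ + ‖z₂‖ + ‖z₃‖ := norm_add₃_le
      _ ≤ 3 := by linarith
  · calc ‖z₁ * z₂ + z₂ * z₃ + z₃ * z₁‖ ≤ ‖z₁ * z₂‖ + ‖z₂ * z₃‖ + ‖z₃ * z₁‖ := norm_add₃_le
      _ ≤ 3 := by simp only [norm_mul]; nlinarith
  · rw [norm_mul, norm_mul]
    exact mul_le_one₀ (mul_le_one₀ h₁ n₂ h₂) n₃ h₃

theorem Complex.ofReal_sub_ne_zero_of_norm_lt {k : ℝ} {s : ℂ} (hs : ‖s‖ < k) :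
    (k : ℂ) - s ≠ 0 := by
  intro h
  rw [← sub_eq_zero.1 h, Complex.norm_real, Real.norm_eq_abs] at hs
  linarith [le_abs_self k]

section SymmetricTridisc

variable {k : ℝ} {z₁ z₂ z₃ : ℂ}

/-- On the torus the left side is `z₁ z₂ z₃` times the conjugate of the right side. -/
theorem norm_mul_sub_le_norm_sub_add (hk : 3 < k) (h₁ : ‖z₁‖ ≤ 1) (h₂ : ‖z₂‖ ≤ 1)
    (h₃ : ‖z₃‖ ≤ 1) :
    ‖(k : ℂ) * (z₁ * z₂ * z₃) - (z₁ * z₂ + z₂ * z₃ + z₃ * z₁)‖ ≤ ‖(k : ℂ) - (z₁ + z₂ + z₃)‖ := by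
  refine Complex.norm_le_norm_of_le_on_torus
    (F := fun a b c => (k : ℂ) * (a * b * c) - (a * b + b * c + c * a))
    (G := fun a b c => (k : ℂ) - (a + b + c)) (by fun_prop) (by fun_prop) (by fun_prop)
    (by fun_prop) (by fun_prop) (by fun_prop)
    (fun a b c ha hb hc => Complex.ofReal_sub_ne_zero_of_norm_lt
      ((norm_elementarySymmetric_le ha hb hc).1.trans_lt hk))
    (fun a b c ha hb hc => le_of_eq ?_) h₁ h₂ h₃
  have ha0 : a ≠ 0 := norm_ne_zero_iff.1 (by simp [ha])
  have hb0 : b ≠ 0 := norm_ne_zero_iff.1 (by simp [hb])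
  have hc0 : c ≠ 0 := norm_ne_zero_iff.1 (by simp [hc])
  have key : (k : ℂ) * (a * b * c) - (a * b + b * c + c * a) =
      a * b * c * (starRingEnd ℂ) ((k : ℂ) - (a + b + c)) := by
    simp only [map_sub, map_add, Complex.conj_ofReal, ← Complex.inv_eq_conj ha,
      ← Complex.inv_eq_conj hb, ← Complex.inv_eq_conj hc]
    field_simp
    ring
  rw [key, norm_mul, Complex.norm_conj]
  simp [ha, hb, hc]

theorem norm_mul_sub_le_norm_sub_mul (hk : 3 < k) (h₁ : ‖z₁‖ ≤ 1) (h₂ : ‖z₂‖ ≤ 1)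
    (h₃ : ‖z₃‖ ≤ 1) :
    ‖(k : ℂ) * (z₁ * z₂ * z₃) - (z₁ + z₂ + z₃)‖ ≤ ‖(k : ℂ) - (z₁ * z₂ + z₂ * z₃ + z₃ * z₁)‖ := by
  refine Complex.norm_le_norm_of_le_on_torus
    (F := fun a b c => (k : ℂ) * (a * b * c) - (a + b + c))
    (G := fun a b c => (k : ℂ) - (a * b + b * c + c * a)) (by fun_prop) (by fun_prop)
    (by fun_prop) (by fun_prop) (by fun_prop) (by fun_prop)
    (fun a b c ha hb hc => Complex.ofReal_sub_ne_zero_of_norm_lt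
      ((norm_elementarySymmetric_le ha hb hc).2.1.trans_lt hk))
    (fun a b c ha hb hc => le_of_eq ?_) h₁ h₂ h₃
  have ha0 : a ≠ 0 := norm_ne_zero_iff.1 (by simp [ha])
  have hb0 : b ≠ 0 := norm_ne_zero_iff.1 (by simp [hb])
  have hc0 : c ≠ 0 := norm_ne_zero_iff.1 (by simp [hc])
  have key : (k : ℂ) * (a * b * c) - (a + b + c) =
      a * b * c * (starRingEnd ℂ) ((k : ℂ) - (a * b + b * c + c * a)) := by
    simp only [map_sub, map_add, map_mul, Complex.conj_ofReal, ← Complex.inv_eq_conj ha,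
      ← Complex.inv_eq_conj hb, ← Complex.inv_eq_conj hc]
    field_simp
    ring
  rw [key, norm_mul, Complex.norm_conj]
  simp [ha, hb, hc]

end SymmetricTridisc

section

open MvPolynomial Finset Filter Topology

theorem MvPolynomial.exists_norm_le_one_mul_eq {σ R : Type*} [NormedRing R] [CompleteSpace R]
    (ψ : MvPolynomial σ ℂ →+* R) (K : Set (σ → ℂ))
    (hψ : ∀ f (C : ℝ), 0 ≤ C → (∀ w ∈ K, ‖eval w f‖ ≤ C) → ‖ψ f‖ ≤ C)
    {p q : MvPolynomial σ ℂ} {ρ : ℝ} (hρ₀ : 0 ≤ ρ) (hρ₁ : ρ < 1)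
    (hq : ∀ w ∈ K, ‖eval w q‖ ≤ ρ) (hpq : ∀ w ∈ K, ‖eval w p‖ ≤ ‖1 - eval w q‖) :
    ∃ M : R, ‖M‖ ≤ 1 ∧ ψ p = M * (1 - ψ q) := by
  have hψq : ‖ψ q‖ < 1 := (hψ q ρ hρ₀ hq).trans_lt hρ₁
  refine ⟨ψ p * ∑' n, ψ q ^ n, ?_, by rw [mul_assoc, geom_series_mul_neg _ hψq, mul_one]⟩
  -- `p / (1 - q)` is the limit of the polynomials `p * (1 + q + ⋯ + q ^ (n - 1))`.
  have hpartial : ∀ n, ‖ψ p * ∑ j ∈ range n, ψ q ^ j‖ ≤ 1 + ρ ^ n := fun n => by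
    simpa only [map_mul, map_sum, map_pow] using
      hψ (p * ∑ j ∈ range n, q ^ j) (1 + ρ ^ n) (by positivity) fun w hw => by
        simp only [map_mul, map_sum, map_pow]
        calc ‖eval w p * ∑ j ∈ range n, eval w q ^ j‖
            ≤ ‖(1 - eval w q) * ∑ j ∈ range n, eval w q ^ j‖ := by
              rw [norm_mul, norm_mul]; gcongr; exact hpq w hw
          _ = ‖1 - eval w q ^ n‖ := by rw [mul_neg_geom_sum]
          _ ≤ 1 + ρ ^ n := by
              refine (norm_sub_le _ _).trans ?_
              rw [norm_one, norm_pow]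
              gcongr
              exact hq w hw
  have hlim : Tendsto (fun n => ψ p * ∑ j ∈ range n, ψ q ^ j) atTop (𝓝 (ψ p * ∑' n, ψ q ^ n)) :=
    (summable_geometric_of_norm_lt_one hψq).hasSum.tendsto_sum_nat.const_mul _
  have hρn : Tendsto (fun n => 1 + ρ ^ n) atTop (𝓝 1) := by
    simpa using (tendsto_pow_atTop_nhds_zero_of_lt_one hρ₀ hρ₁).const_add 1
  exact le_of_tendsto_of_tendsto' hlim.norm hρn hpartial

theorem le_of_le_on_Ioi_of_continuous {α β : Type*} [TopologicalSpace α] [LinearOrder α]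
    [OrderTopology α] [DenselyOrdered α] [NoMaxOrder α] [TopologicalSpace β] [Preorder β]
    [OrderClosedTopology β] {f g : α → β} (hf : Continuous f) (hg : Continuous g) {a : α}
    (h : ∀ x, a < x → f x ≤ g x) {x : α} (hx : a ≤ x) : f x ≤ g x :=
  (isClosed_le hf hg).closure_subset_iff.2 (show Set.Ioi a ⊆ {x | f x ≤ g x} from h)
    (by rwa [closure_Ioi])

theorem ContinuousLinearMap.isPositive_star_mul_self_sub_of_norm_apply_le {E : Type*}
    [NormedAddCommGroup E] [InnerProductSpace ℂ E] [CompleteSpace E] {A B : E →L[ℂ] E}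
    (hBA : ∀ x, ‖B x‖ ≤ ‖A x‖) : (star A * A - star B * B).IsPositive := by
  refine isPositive_def'.2 ⟨by simp [IsSelfAdjoint, star_sub], fun x => ?_⟩
  have hquad : ∀ T : E →L[ℂ] E, inner ℂ ((star T * T) x) x = ((‖T x‖ ^ 2 : ℝ) : ℂ) := fun T => by
    rw [mul_apply_eq_comp, star_eq_adjoint, adjoint_inner_left, inner_self_eq_norm_sq_to_K]
    norm_cast
  rw [reApplyInnerSelf_apply, sub_apply, inner_sub_left, hquad, hquad, ← Complex.ofReal_sub,
    RCLike.re_to_complex, Complex.ofReal_re, sub_nonneg]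
  exact pow_le_pow_left₀ (norm_nonneg _) (hBA x) 2

def Gamma3Fin : Set (Fin 3 → ℂ) := (fun w => ![w.1, w.2.1, w.2.2]) '' Gamma3

theorem norm_le_three_of_mem_Gamma3Fin {w : Fin 3 → ℂ} (hw : w ∈ Gamma3Fin) (i : Fin 3) :
    ‖w i‖ ≤ 3 := by
  obtain ⟨_, ⟨z₁, z₂, z₃, h₁, h₂, h₃, rfl⟩, rfl⟩ := hw
  obtain ⟨he₁, he₂, he₃⟩ := norm_elementarySymmetric_le h₁ h₂ h₃
  fin_cases i
  exacts [he₁, he₂, he₃.trans (by norm_num)]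

theorem norm_mul_pow_sub_le_of_mem_Gamma3Fin_left {k : ℝ} (hk : 3 < k) {α : ℂ} (hα : ‖α‖ ≤ 1)
    {w : Fin 3 → ℂ} (hw : w ∈ Gamma3Fin) :
    ‖(k : ℂ) * α ^ 3 * w 2 - α ^ 2 * w 1‖ ≤ ‖(k : ℂ) - α * w 0‖ := by
  obtain ⟨_, ⟨z₁, z₂, z₃, h₁, h₂, h₃, rfl⟩, rfl⟩ := hw
  have hαz : ∀ z : ℂ, ‖z‖ ≤ 1 → ‖α * z‖ ≤ 1 := fun z hz => by
    rw [norm_mul]; exact mul_le_one₀ hα (norm_nonneg _) hz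
  convert norm_mul_sub_le_norm_sub_add hk (hαz z₁ h₁) (hαz z₂ h₂) (hαz z₃ h₃) using 2 <;>
    simp only [Matrix.cons_val_zero, Matrix.cons_val_one, Matrix.cons_val_two, Matrix.tail_cons,
      Matrix.head_cons] <;> ring

theorem norm_mul_pow_sub_le_of_mem_Gamma3Fin_right {k : ℝ} (hk : 3 < k) {α : ℂ} (hα : ‖α‖ ≤ 1)
    {w : Fin 3 → ℂ} (hw : w ∈ Gamma3Fin) :
    ‖(k : ℂ) * α ^ 3 * w 2 - α * w 0‖ ≤ ‖(k : ℂ) - α ^ 2 * w 1‖ := by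
  obtain ⟨_, ⟨z₁, z₂, z₃, h₁, h₂, h₃, rfl⟩, rfl⟩ := hw
  have hαz : ∀ z : ℂ, ‖z‖ ≤ 1 → ‖α * z‖ ≤ 1 := fun z hz => by
    rw [norm_mul]; exact mul_le_one₀ hα (norm_nonneg _) hz
  convert norm_mul_sub_le_norm_sub_mul hk (hαz z₁ h₁) (hαz z₂ h₂) (hαz z₃ h₃) using 2 <;>
    simp only [Matrix.cons_val_zero, Matrix.cons_val_one, Matrix.cons_val_two, Matrix.tail_cons,
      Matrix.head_cons] <;> ring

section OperatorEvaluation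

variable {H : Type*} [NormedAddCommGroup H] [InnerProductSpace ℂ H] {S1 S2 P : H →L[ℂ] H}

theorem opEval3_monomial (u : Fin 3 →₀ ℕ) (c : ℂ) :
    opEval3 S1 S2 P (monomial u c) = c • (S1 ^ u 0 * S2 ^ u 1 * P ^ u 2) :=
  sum_monomial_eq (zero_smul ℂ _)

theorem opEval3_X (i : Fin 3) : opEval3 S1 S2 P (X i) = ![S1, S2, P] i := by
  rw [X, opEval3_monomial]
  fin_cases i <;> simp

open scoped IsMulCommutative in
theorem exists_algHom_eq_opEval3 (h₁₂ : Commute S1 S2) (h₁₃ : Commute S1 P)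
    (h₂₃ : Commute S2 P) :
    ∃ ψ : MvPolynomial (Fin 3) ℂ →ₐ[ℂ] (H →L[ℂ] H), ⇑ψ = opEval3 S1 S2 P := by
  have hcomm : ∀ a ∈ ({S1, S2, P} : Set (H →L[ℂ] H)), ∀ b ∈ ({S1, S2, P} : Set _),
      a * b = b * a := by
    rintro a (rfl | rfl | rfl) b (rfl | rfl | rfl)
    exacts [rfl, h₁₂, h₁₃, h₁₂.symm, rfl, h₂₃, h₁₃.symm, h₂₃.symm, rfl]
  have := Algebra.isMulCommutative_adjoin ℂ hcomm
  let v : Fin 3 → Algebra.adjoin ℂ {S1, S2, P} :=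
    ![⟨S1, Algebra.subset_adjoin (by simp)⟩, ⟨S2, Algebra.subset_adjoin (by simp)⟩,
      ⟨P, Algebra.subset_adjoin (by simp)⟩]
  refine ⟨(Algebra.adjoin ℂ {S1, S2, P}).val.comp (aeval v), funext fun q => ?_⟩
  induction q using MvPolynomial.induction_on' with
  | monomial u c =>
    rw [opEval3_monomial, AlgHom.comp_apply, aeval_monomial, Finsupp.prod_pow,
      Fin.prod_univ_three]
    simp [v, Algebra.smul_def]
  | add p q hp hq =>
    rw [map_add, hp, hq, opEval3, opEval3, opEval3, AddMonoidAlgebra.coeff_add]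
    symm
    exact Finsupp.sum_add_index' (fun _ => zero_smul _ _) fun _ _ _ => add_smul _ _ _

theorem IsGamma3Contraction.norm_opEval3_le (h : IsGamma3Contraction S1 S2 P)
    {q : MvPolynomial (Fin 3) ℂ} {C : ℝ} (hC : 0 ≤ C) (hq : ∀ w ∈ Gamma3Fin, ‖eval w q‖ ≤ C) :
    ‖opEval3 S1 S2 P q‖ ≤ C :=
  (h.2.2.2 q).trans <| Real.iSup_le (fun _ => Real.iSup_le
    (fun hw => hq _ (Set.mem_image_of_mem _ hw)) hC) hC

end OperatorEvaluation

section Pencil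

variable {H : Type*} [NormedAddCommGroup H] [InnerProductSpace ℂ H] [CompleteSpace H]
  {S1 S2 P : H →L[ℂ] H}

theorem IsGamma3Contraction.norm_apply_le_of_le_on_Gamma3Fin (h : IsGamma3Contraction S1 S2 P)
    {k : ℝ} (hk : 3 < k) (i : Fin 3) {β : ℂ} (hβ : ‖β‖ ≤ 1) {p : MvPolynomial (Fin 3) ℂ}
    (hp : ∀ w ∈ Gamma3Fin, ‖eval w p‖ ≤ ‖(k : ℂ) - β * w i‖) (x : H) :
    ‖opEval3 S1 S2 P p x‖ ≤ ‖((k : ℂ) • (1 : H →L[ℂ] H) - β • ![S1, S2, P] i) x‖ := by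
  obtain ⟨ψ, hψ⟩ := exists_algHom_eq_opEval3 h.1 h.2.1 h.2.2.1
  have hk₀ : 0 < k := by linarith
  have hkC : (k : ℂ) ≠ 0 := Complex.ofReal_ne_zero.2 hk₀.ne'
  have hnorm_div : ∀ z : ℂ, ‖z / k‖ = ‖z‖ / k := fun z => by
    rw [norm_div, Complex.norm_real, Real.norm_of_nonneg hk₀.le]
  obtain ⟨M, hM, hMeq⟩ := MvPolynomial.exists_norm_le_one_mul_eq ψ.toRingHom Gamma3Fin
    (fun f C hC hf => hψ ▸ h.norm_opEval3_le hC hf) (p := C (k : ℂ)⁻¹ * p)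
    (q := C (β / k) * X i) (ρ := 3 / k) (by positivity) (by rwa [div_lt_one hk₀])
    (fun w hw => by
      rw [eval_mul, eval_C, eval_X, norm_mul, hnorm_div]
      calc ‖β‖ / k * ‖w i‖ ≤ 1 / k * 3 := by
            gcongr
            exact norm_le_three_of_mem_Gamma3Fin hw i
        _ = 3 / k := by ring)
    (fun w hw => by
      simp only [eval_mul, eval_C, eval_X]
      rw [← div_eq_inv_mul, hnorm_div,
        show 1 - β / k * w i = ((k : ℂ) - β * w i) / k by field_simp, hnorm_div]
      gcongr
      exact hp w hw)
  have hX : ψ (X i) = ![S1, S2, P] i := by rw [hψ, opEval3_X]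
  have hfactor : opEval3 S1 S2 P p = M * ((k : ℂ) • (1 : H →L[ℂ] H) - β • ![S1, S2, P] i) := by
    simp only [AlgHom.toRingHom_eq_coe, RingHom.coe_coe, C_mul', map_smul, hX] at hMeq
    calc opEval3 S1 S2 P p = (k : ℂ) • ((k : ℂ)⁻¹ • ψ p) := by
          rw [smul_smul, mul_inv_cancel₀ hkC, one_smul, hψ]
      _ = M * ((k : ℂ) • (1 - (β / k) • ![S1, S2, P] i)) := by rw [hMeq, mul_smul_comm]
      _ = _ := by rw [smul_sub, smul_smul, mul_div_cancel₀ _ hkC]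
  rw [hfactor, mul_apply_eq_comp]
  exact (M.le_of_opNorm_le hM _).trans_eq (one_mul _)

theorem IsGamma3Contraction.norm_pencil_apply_le (h : IsGamma3Contraction S1 S2 P) {k : ℝ}
    (hk : 3 ≤ k) (i j : Fin 3) {β γ δ : ℂ} (hβ : ‖β‖ ≤ 1)
    (hscal : ∀ k' : ℝ, 3 < k' → ∀ w ∈ Gamma3Fin,
      ‖(k' : ℂ) * δ * w 2 - γ * w j‖ ≤ ‖(k' : ℂ) - β * w i‖) (x : H) :
    ‖(((k : ℂ) * δ) • P - γ • ![S1, S2, P] j) x‖ ≤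
      ‖((k : ℂ) • (1 : H →L[ℂ] H) - β • ![S1, S2, P] i) x‖ := by
  refine le_of_le_on_Ioi_of_continuous
    (f := fun k : ℝ => ‖(((k : ℂ) * δ) • P - γ • ![S1, S2, P] j) x‖)
    (g := fun k : ℝ => ‖((k : ℂ) • (1 : H →L[ℂ] H) - β • ![S1, S2, P] i) x‖)
    (by fun_prop) (by fun_prop) (fun k' hk' => ?_) hk
  obtain ⟨ψ, hψ⟩ := exists_algHom_eq_opEval3 h.1 h.2.1 h.2.2.1
  have hpencil := h.norm_apply_le_of_le_on_Gamma3Fin hk' i hβ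
    (p := C ((k' : ℂ) * δ) * X 2 - C γ * X j) (fun w hw => by simpa using hscal k' hk' w hw) x
  rwa [← hψ, map_sub, C_mul', C_mul', map_smul, map_smul, hψ, opEval3_X, opEval3_X] at hpencil

end Pencil

end

theorem gamma3_pencil_positivity
    {H : Type*} [NormedAddCommGroup H] [InnerProductSpace ℂ H] [CompleteSpace H]
    (S1 S2 P : H →L[ℂ] H) (h : IsGamma3Contraction S1 S2 P)
    (k : ℝ) (hk : 3 ≤ k) (α : ℂ) (hα : ‖α‖ ≤ 1) :
    (star ((k : ℂ) • (1 : H →L[ℂ] H) - α • S1) * ((k : ℂ) • (1 : H →L[ℂ] H) - α • S1) -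
      star (((k : ℂ) * α ^ 3) • P - (α ^ 2) • S2) *
        (((k : ℂ) * α ^ 3) • P - (α ^ 2) • S2)).IsPositive ∧
    (star ((k : ℂ) • (1 : H →L[ℂ] H) - (α ^ 2) • S2) *
        ((k : ℂ) • (1 : H →L[ℂ] H) - (α ^ 2) • S2) -
      star (((k : ℂ) * α ^ 3) • P - α • S1) *
        (((k : ℂ) * α ^ 3) • P - α • S1)).IsPositive := by
  have hα₂ : ‖α ^ 2‖ ≤ 1 := by rw [norm_pow]; exact pow_le_one₀ (norm_nonneg _) hα
  refine ⟨ContinuousLinearMap.isPositive_star_mul_self_sub_of_norm_apply_le fun x => ?_,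
    ContinuousLinearMap.isPositive_star_mul_self_sub_of_norm_apply_le fun x => ?_⟩
  · simpa using h.norm_pencil_apply_le hk 0 1 hα
      (fun k' hk' w hw => norm_mul_pow_sub_le_of_mem_Gamma3Fin_left hk' hα hw) x
  · simpa using h.norm_pencil_apply_le hk 1 0 hα₂
      (fun k' hk' w hw => norm_mul_pow_sub_le_of_mem_Gamma3Fin_right hk' hα hw) x
end

section
/- Let A₁, A₂ be bounded operators on a complex Hilbert space and let c be a real number such that the numerical radius ω(A₁ + zA₂) ≤ c for all z ∈ ℂ with |z| = 1. Then ω(A₁ + zA₂*) ≤ c and ω(A₁* + zA₂) ≤ c for all z ∈ ℂ with |z| = 1. -/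
/-! For a unit vector `x`, choosing the phase of `z` so that `⟨A₁x, x⟩` and `z̄⟨A₂x, x⟩` point the
same way gives `|⟨A₁x, x⟩| + |⟨A₂x, x⟩| ≤ c`. Since `|⟨A₂*x, x⟩| = |⟨A₂x, x⟩|`, the triangle
inequality then bounds `|⟨(A₁ + zA₂*)x, x⟩|` by `c`. The second bound follows from the first because
`(A₁* + zA₂)* = A₁ + z̄A₂*` and adjoints have the same numerical radius. -/

open ComplexConjugate

theorem Complex.exists_norm_eq_one_norm_add_mul_eq (a b : ℂ) :
    ∃ z : ℂ, ‖z‖ = 1 ∧ ‖a + z * b‖ = ‖a‖ + ‖b‖ := by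
  set u := Complex.exp (a.arg * Complex.I)
  set v := Complex.exp (b.arg * Complex.I)
  have ha : (‖a‖ : ℂ) * u = a := Complex.norm_mul_exp_arg_mul_I a
  have hb : (‖b‖ : ℂ) * v = b := Complex.norm_mul_exp_arg_mul_I b
  have hu : ‖u‖ = 1 := Complex.norm_exp_ofReal_mul_I _
  have hv : ‖v‖ = 1 := Complex.norm_exp_ofReal_mul_I _
  have hv0 : v ≠ 0 := Complex.exp_ne_zero _
  refine ⟨u / v, by rw [norm_div, hu, hv, div_one], ?_⟩
  have hrot : a + u / v * b = ((‖a‖ + ‖b‖ : ℝ) : ℂ) * u := by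
    calc a + u / v * b = ‖a‖ * u + u / v * (‖b‖ * v) := by rw [ha, hb]
      _ = ((‖a‖ + ‖b‖ : ℝ) : ℂ) * u := by field_simp; push_cast; ring
  rw [hrot, norm_mul, hu, mul_one, Complex.norm_real, Real.norm_eq_abs,
    abs_of_nonneg (by positivity)]

section NumRadius

variable {H : Type*} [NormedAddCommGroup H] [InnerProductSpace ℂ H]

theorem numRadius_nonneg (A : H →L[ℂ] H) : 0 ≤ numRadius A :=
  Real.iSup_nonneg fun _ => norm_nonneg _

theorem norm_inner_apply_self_le_numRadius (A : H →L[ℂ] H) {x : H} (hx : ‖x‖ = 1) :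
    ‖inner ℂ (A x) x‖ ≤ numRadius A := by
  refine le_ciSup (f := fun x : {x : H // ‖x‖ = 1} => ‖inner ℂ (A x.1) x.1‖) ⟨‖A‖, ?_⟩ ⟨x, hx⟩
  rintro _ ⟨⟨y, hy⟩, rfl⟩
  simpa [hy] using (norm_inner_le_norm (𝕜 := ℂ) (A y) y).trans
    (mul_le_mul_of_nonneg_right (A.le_opNorm y) (norm_nonneg y))

theorem numRadius_le_of_forall {A : H →L[ℂ] H} {c : ℝ} (hc : 0 ≤ c)
    (hA : ∀ x : H, ‖x‖ = 1 → ‖inner ℂ (A x) x‖ ≤ c) : numRadius A ≤ c := by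
  rcases isEmpty_or_nonempty {x : H // ‖x‖ = 1} with hempty | hne
  · exact (Real.iSup_of_isEmpty _).trans_le hc
  · exact ciSup_le fun x => hA x.1 x.2

theorem norm_inner_star_apply_self [CompleteSpace H] (A : H →L[ℂ] H) (x : H) :
    ‖inner ℂ (star A x) x‖ = ‖inner ℂ (A x) x‖ := by
  rw [ContinuousLinearMap.star_eq_adjoint, ContinuousLinearMap.adjoint_inner_left, norm_inner_symm]

theorem numRadius_star [CompleteSpace H] (A : H →L[ℂ] H) : numRadius (star A) = numRadius A := by
  simp only [numRadius, norm_inner_star_apply_self]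

theorem inner_add_smul_apply_self (A B : H →L[ℂ] H) (z : ℂ) (x : H) :
    inner ℂ ((A + z • B) x) x = inner ℂ (A x) x + conj z * inner ℂ (B x) x := by
  rw [add_apply, smul_apply, inner_add_left, inner_smul_left]

theorem norm_inner_add_norm_inner_le_of_numRadius_le {A B : H →L[ℂ] H} {c : ℝ}
    (h : ∀ z : ℂ, ‖z‖ = 1 → numRadius (A + z • B) ≤ c) {x : H} (hx : ‖x‖ = 1) :
    ‖inner ℂ (A x) x‖ + ‖inner ℂ (B x) x‖ ≤ c := by
  obtain ⟨w, hw, hsum⟩ :=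
    Complex.exists_norm_eq_one_norm_add_mul_eq (inner ℂ (A x) x) (inner ℂ (B x) x)
  have hw' : ‖conj w‖ = 1 := by rwa [RCLike.norm_conj]
  calc ‖inner ℂ (A x) x‖ + ‖inner ℂ (B x) x‖ = ‖inner ℂ ((A + conj w • B) x) x‖ := by
        rw [inner_add_smul_apply_self, Complex.conj_conj, hsum]
    _ ≤ c := (norm_inner_apply_self_le_numRadius _ hx).trans (h _ hw')

theorem numRadius_add_smul_star_le [CompleteSpace H] {A B : H →L[ℂ] H} {c : ℝ}
    (h : ∀ z : ℂ, ‖z‖ = 1 → numRadius (A + z • B) ≤ c) {z : ℂ} (hz : ‖z‖ = 1) :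
    numRadius (A + z • star B) ≤ c := by
  refine numRadius_le_of_forall ((numRadius_nonneg _).trans (h 1 norm_one)) fun x hx => ?_
  calc ‖inner ℂ ((A + z • star B) x) x‖
      ≤ ‖inner ℂ (A x) x‖ + ‖conj z * inner ℂ (star B x) x‖ := by
        rw [inner_add_smul_apply_self]; exact norm_add_le _ _
    _ = ‖inner ℂ (A x) x‖ + ‖inner ℂ (B x) x‖ := by
        rw [norm_mul, RCLike.norm_conj, hz, one_mul, norm_inner_star_apply_self]
    _ ≤ c := norm_inner_add_norm_inner_le_of_numRadius_le h hx

end NumRadius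

theorem numRadius_adjoint_bound
    {H : Type*} [NormedAddCommGroup H] [InnerProductSpace ℂ H] [CompleteSpace H]
    (A1 A2 : H →L[ℂ] H) (c : ℝ)
    (h : ∀ z : ℂ, ‖z‖ = 1 → numRadius (A1 + z • A2) ≤ c) :
    (∀ z : ℂ, ‖z‖ = 1 → numRadius (A1 + z • star A2) ≤ c) ∧
    (∀ z : ℂ, ‖z‖ = 1 → numRadius (star A1 + z • A2) ≤ c) := by
  refine ⟨fun z hz => numRadius_add_smul_star_le h hz, fun z hz => ?_⟩
  have hstar : star (star A1 + z • A2) = A1 + conj z • star A2 := by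
    rw [star_add, star_star, star_smul, Complex.star_def]
  rw [← numRadius_star, hstar]
  exact numRadius_add_smul_star_le h (by rwa [RCLike.norm_conj])
end

section
/- Let A₁, A₂ be bounded operators on a complex Hilbert space. The following are equivalent: (i) (A₁,A₂) is almost normal; (ii) A₁* + zA₂ and A₂* + zA₁ commute for every z ∈ ℂ with |z| = 1; (iii) A₂* + zA₁ is a normal operator for every z ∈ ℂ with |z| = 1; (iv) A₁* + zA₂ is a normal operator for every z ∈ ℂ with |z| = 1. -/
/-!
For `|z| = 1` put `N_z = A₂* + z A₁`. Expanding, the self-commutator `N_z* N_z - N_z N_z*` equals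
`E + z C + z̄ C*` with `E = [A₁*, A₁] - [A₂*, A₂]` and `C = A₂ A₁ - A₁ A₂`, and this vanishes for
every unimodular `z` iff `E = C = 0` (test `z = 1, -1, i`), i.e. iff the pair is almost normal.
Since `A₁* + z A₂ = z N_z*`, both the commutation condition and normality of `A₁* + z A₂` are
equivalent to normality of `N_z`.
-/

open ComplexConjugate

lemma eq_zero_of_forall_norm_eq_one {M : Type*} [AddCommGroup M] [Module ℂ M] {e c d : M}
    (h : ∀ z : ℂ, ‖z‖ = 1 → e + z • c + conj z • d = 0) : e = 0 ∧ c = 0 := by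
  have h1 := h 1 (by simp)
  have h2 := h (-1) (by simp)
  have hi := h Complex.I (by simp)
  simp only [map_one, map_neg, Complex.conj_I] at h1 h2 hi
  constructor
  · linear_combination (norm := module) (1 / 2 : ℂ) • h1 + (1 / 2 : ℂ) • h2
  · linear_combination (norm := skip)
      ((1 + Complex.I) / 4) • h1 + ((-1 + Complex.I) / 4) • h2 - (Complex.I / 2) • hi
    match_scalars <;> ring_nf <;> simp [Complex.I_sq]

section StarAlgebra

variable {R : Type*} [Ring R] [StarRing R]

def selfCommutator (x : R) : R := star x * x - x * star x

lemma isStarNormal_iff_selfCommutator_eq_zero {x : R} :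
    IsStarNormal x ↔ selfCommutator x = 0 := by
  rw [isStarNormal_iff, selfCommutator, sub_eq_zero]
  rfl

variable [Algebra ℂ R] [StarModule ℂ R]

lemma isStarNormal_smul_star_iff {z : ℂ} (hz : z ≠ 0) {x : R} :
    IsStarNormal (z • star x) ↔ IsStarNormal x := by
  simp [isStarNormal_iff, star_smul, hz, Commute.symm_iff]

lemma star_add_smul_eq_smul_star {z : ℂ} (hz : ‖z‖ = 1) (a b : R) :
    star a + z • b = z • star (star b + z • a) := by
  have : z * conj z = 1 := by
    rw [Complex.mul_conj, Complex.normSq_eq_norm_sq, hz]; norm_num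
  simp [star_smul, smul_add, smul_smul, this, add_comm]

lemma selfCommutator_star_add_smul {z : ℂ} (hz : ‖z‖ = 1) (a b : R) :
    selfCommutator (star b + z • a) = selfCommutator a - selfCommutator b
      + z • (b * a - a * b) + conj z • star (b * a - a * b) := by
  have : conj z * z = 1 := by
    rw [Complex.conj_mul', hz]; norm_num
  simp only [selfCommutator, star_add, star_sub, star_smul, star_mul, star_star, Complex.star_def,
    mul_add, add_mul, smul_add, smul_sub, smul_smul, smul_mul_assoc, mul_smul_comm, this,
    mul_comm z (conj z), one_smul]
  abel

lemma commute_and_selfCommutator_eq_iff_forall_isStarNormal (a b : R) :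
    Commute a b ∧ selfCommutator a = selfCommutator b ↔
      ∀ z : ℂ, ‖z‖ = 1 → IsStarNormal (star b + z • a) := by
  simp only [isStarNormal_iff_selfCommutator_eq_zero]
  constructor
  · rintro ⟨hab, hself⟩ z hz
    simp [selfCommutator_star_add_smul hz, hself, hab.eq]
  · intro h
    obtain ⟨hself, hab⟩ := eq_zero_of_forall_norm_eq_one fun z hz =>
      (selfCommutator_star_add_smul hz a b).symm.trans (h z hz)
    exact ⟨(sub_eq_zero.mp hab).symm, sub_eq_zero.mp hself⟩

end StarAlgebra

theorem almostNormal_iff_characterizations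
    {H : Type*} [NormedAddCommGroup H] [InnerProductSpace ℂ H] [CompleteSpace H]
    (A1 A2 : H →L[ℂ] H) :
    (AlmostNormal A1 A2 ↔
      ∀ z : ℂ, ‖z‖ = 1 → Commute (star A1 + z • A2) (star A2 + z • A1)) ∧
    (AlmostNormal A1 A2 ↔ ∀ z : ℂ, ‖z‖ = 1 → IsStarNormal (star A2 + z • A1)) ∧
    (AlmostNormal A1 A2 ↔ ∀ z : ℂ, ‖z‖ = 1 → IsStarNormal (star A1 + z • A2)) := by
  have key : AlmostNormal A1 A2 ↔ ∀ z : ℂ, ‖z‖ = 1 → IsStarNormal (star A2 + z • A1) :=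
    commute_and_selfCommutator_eq_iff_forall_isStarNormal A1 A2
  refine ⟨key.trans (forall₂_congr fun z hz => ?_), key, key.trans (forall₂_congr fun z hz => ?_)⟩
  all_goals
    have hz0 : z ≠ 0 := norm_ne_zero_iff.mp (hz.symm ▸ one_ne_zero)
    rw [star_add_smul_eq_smul_star hz A1 A2]
  · rw [Commute.smul_left_iff₀ hz0, isStarNormal_iff]
  · rw [isStarNormal_smul_star_iff hz0]
end

section
/- Let T be a contraction on a complex Hilbert space H and let V, acting on a Hilbert space K containing H as a closed subspace, be a minimal isometric dilation of T. Then there is a unitary operator from 𝒟_{T*} onto 𝒟_{V*}; in particular, the defect spaces of T* and V* have the same dimension. -/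
/-!
Minimality forces `V* ι = ι T*`: on each spanning vector `V^n ι h` both `ι* V` and `T ι*` give
`T^(n+1) h`. Hence `‖D_{V*} ι h‖² = ‖h‖² - ‖T* h‖² = ‖D_{T*} h‖²`, so `D_{T*} h ↦ D_{V*} ι h` extends
to an isometry of `𝒟_{T*}` into `𝒟_{V*}`. It is onto because `D_{V*}` vanishes on the range of the
isometry `V`, so it maps the dense span of the `V^n ι h` into the range of `D_{V*} ι`.
-/

open ContinuousLinearMap

section Closure

variable {𝕜 E F G : Type*} [NormedField 𝕜] [AddCommGroup E] [Module 𝕜 E]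
  [NormedAddCommGroup F] [NormedSpace 𝕜 F] [NormedAddCommGroup G] [NormedSpace 𝕜 G]

theorem LinearMap.denseRange_codRestrict_topologicalClosure_range (A : E →ₗ[𝕜] F) :
    DenseRange (A.codRestrict (LinearMap.range A).topologicalClosure
      fun x => (LinearMap.range A).le_topologicalClosure (LinearMap.mem_range_self A x)) := by
  rw [DenseRange, Subtype.dense_iff, ← Set.range_comp]
  exact subset_rfl

theorem LinearMap.nonempty_linearIsometryEquiv_topologicalClosure_range_of_norm_eq
    [CompleteSpace F] [CompleteSpace G] {A : E →ₗ[𝕜] F} {B : E →ₗ[𝕜] G}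
    (h : ∀ x, ‖A x‖ = ‖B x‖) :
    Nonempty ((LinearMap.range A).topologicalClosure ≃ₗᵢ[𝕜]
      (LinearMap.range B).topologicalClosure) :=
  have := (LinearMap.range A).isClosed_topologicalClosure.completeSpace_coe
  have := (LinearMap.range B).isClosed_topologicalClosure.completeSpace_coe
  ⟨(LinearEquiv.refl 𝕜 E).extendOfIsometry _ _ A.denseRange_codRestrict_topologicalClosure_range
    B.denseRange_codRestrict_topologicalClosure_range fun x => (h x).symm⟩

theorem topologicalClosure_range_comp_eq_of_comp_eq_zero {D V : G →L[𝕜] G} {ι : F →L[𝕜] G}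
    (hDV : D ∘L V = 0)
    (hmin : Dense (Submodule.span 𝕜 {x | ∃ (n : ℕ) (h : F), x = (V ^ n) (ι h)} : Set G)) :
    (LinearMap.range (D ∘L ι : F →ₗ[𝕜] G)).topologicalClosure =
      (LinearMap.range (D : G →ₗ[𝕜] G)).topologicalClosure := by
  refine le_antisymm (Submodule.topologicalClosure_mono (LinearMap.range_comp_le_range _ _))
    (Submodule.topologicalClosure_minimal _ ?_ (Submodule.isClosed_topologicalClosure _))
  have hspan : (Submodule.span 𝕜 {x | ∃ (n : ℕ) (h : F), x = (V ^ n) (ι h)}).map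
      (D : G →ₗ[𝕜] G) ≤ LinearMap.range (D ∘L ι : F →ₗ[𝕜] G) := by
    rw [Submodule.map_span_le]
    rintro _ ⟨n | n, h, rfl⟩
    · exact ⟨h, rfl⟩
    · have hzero : D ((V ^ (n + 1)) (ι h)) = 0 := by
        rw [pow_succ', mul_apply_eq_comp, ← comp_apply D V, hDV, zero_apply]
      exact hzero ▸ Submodule.zero_mem _
  calc LinearMap.range (D : G →ₗ[𝕜] G)
      = (Submodule.span 𝕜 {x | ∃ (n : ℕ) (h : F), x = (V ^ n) (ι h)}).topologicalClosure.map
          (D : G →ₗ[𝕜] G) := by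
        rw [Submodule.dense_iff_topologicalClosure_eq_top.mp hmin, Submodule.map_top]
    _ ≤ _ := Submodule.topologicalClosure_map D _
    _ ≤ _ := Submodule.topologicalClosure_mono hspan

end Closure

theorem opNorm_le_one_of_norm_map {𝕜 E F : Type*} [NontriviallyNormedField 𝕜]
    [NormedAddCommGroup E] [NormedSpace 𝕜 E] [NormedAddCommGroup F] [NormedSpace 𝕜 F]
    {V : E →L[𝕜] F} (hV : ∀ x, ‖V x‖ = ‖x‖) : ‖V‖ ≤ 1 :=
  opNorm_le_bound _ zero_le_one fun x => by rw [hV, one_mul]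

theorem adjoint_comp_eq_comp_adjoint_of_dilation {𝕜 E F : Type*} [RCLike 𝕜]
    [NormedAddCommGroup E] [InnerProductSpace 𝕜 E] [CompleteSpace E]
    [NormedAddCommGroup F] [InnerProductSpace 𝕜 F] [CompleteSpace F]
    {T : E →L[𝕜] E} {V : F →L[𝕜] F} {ι : E →L[𝕜] F}
    (hdil : ∀ n : ℕ, adjoint ι ∘L ((V ^ n) ∘L ι) = T ^ n)
    (hmin : Dense (Submodule.span 𝕜 {x | ∃ (n : ℕ) (h : E), x = (V ^ n) (ι h)} : Set F)) :
    adjoint V ∘L ι = ι ∘L adjoint T := by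
  have h : adjoint ι ∘L V = T ∘L adjoint ι := by
    refine ext_on hmin ?_
    rintro _ ⟨n, h, rfl⟩
    have hn := congr($(hdil n) h)
    have hn1 := congr($(hdil (n + 1)) h)
    simp only [comp_apply, pow_succ', mul_apply_eq_comp] at hn hn1 ⊢
    rw [hn, hn1]
  simpa using congr(adjoint $h)

theorem one_sub_star_mul_self_nonneg {A : Type*} [CStarAlgebra A] [PartialOrder A]
    [StarOrderedRing A] {a : A} (ha : ‖a‖ ≤ 1) : 0 ≤ 1 - star a * a := by
  refine sub_nonneg.mpr (CStarAlgebra.star_mul_le_algebraMap_norm_sq.trans ?_)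
  rw [← map_one (algebraMap ℝ A)]
  exact algebraMap_mono _ (pow_le_one₀ (norm_nonneg a) ha)

section Defect

variable {E F : Type*} [NormedAddCommGroup E] [InnerProductSpace ℂ E] [CompleteSpace E]
  [NormedAddCommGroup F] [InnerProductSpace ℂ F] [CompleteSpace F]

theorem norm_defectOp_apply_sq {A : E →L[ℂ] E} (hA : ‖A‖ ≤ 1) (x : E) :
    ‖defectOp A x‖ ^ 2 = ‖x‖ ^ 2 - ‖A x‖ ^ 2 := by
  have hsa : adjoint (defectOp A) = defectOp A :=
    ((CFC.sqrt_nonneg _).isSelfAdjoint : star (defectOp A) = _)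
  have hsq : defectOp A * defectOp A = 1 - star A * A :=
    CFC.sqrt_mul_sqrt_self _ (one_sub_star_mul_self_nonneg hA)
  rw [apply_norm_sq_eq_inner_adjoint_left, hsa, ← mul_def, hsq, apply_norm_sq_eq_inner_adjoint_left,
    star_eq_adjoint, ← inner_self_eq_norm_sq (𝕜 := ℂ)]
  simp [inner_sub_left]

theorem norm_defectOp_apply_of_comp_eq {A : E →L[ℂ] E} {B : F →L[ℂ] F} (hA : ‖A‖ ≤ 1)
    (hB : ‖B‖ ≤ 1) (ι : E →ₗᵢ[ℂ] F)
    (h : B ∘L ι.toContinuousLinearMap = ι.toContinuousLinearMap ∘L A) (x : E) :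
    ‖defectOp B (ι x)‖ = ‖defectOp A x‖ := by
  have hBx : B (ι x) = ι (A x) := congr($h x)
  rw [← sq_eq_sq₀ (norm_nonneg _) (norm_nonneg _), norm_defectOp_apply_sq hB,
    norm_defectOp_apply_sq hA, hBx, ι.norm_map, ι.norm_map]

theorem defectOp_star_comp_self_eq_zero {V : E →L[ℂ] E} (hV : ∀ x, ‖V x‖ = ‖x‖) :
    defectOp (star V) ∘L V = 0 := by
  have hVV : adjoint V ∘L V = 1 := V.norm_map_iff_adjoint_comp_self.mp hV
  have hV1 : ‖star V‖ ≤ 1 := norm_star V ▸ opNorm_le_one_of_norm_map hV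
  ext x
  rw [comp_apply, zero_apply, ← norm_eq_zero, ← sq_eq_zero_iff, norm_defectOp_apply_sq hV1,
    star_eq_adjoint, ← comp_apply, hVV, one_apply_eq_self, hV, sub_self]

end Defect

theorem defect_spaces_of_minimal_isometric_dilation
    {H : Type*} [NormedAddCommGroup H] [InnerProductSpace ℂ H] [CompleteSpace H]
    {K : Type*} [NormedAddCommGroup K] [InnerProductSpace ℂ K] [CompleteSpace K]
    (T : H →L[ℂ] H) (hT : ‖T‖ ≤ 1) (V : K →L[ℂ] K) (ι : H →ₗᵢ[ℂ] K)
    (hV : ∀ x, ‖V x‖ = ‖x‖)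
    (hdil : ∀ n : ℕ, ContinuousLinearMap.adjoint ι.toContinuousLinearMap ∘L
        ((V ^ n) ∘L ι.toContinuousLinearMap) = T ^ n)
    (hmin : (Submodule.span ℂ
        {x : K | ∃ (n : ℕ) (h : H), x = (V ^ n) (ι h)}).topologicalClosure = ⊤) :
    Nonempty ((defectSpace (star T)) ≃ₗᵢ[ℂ] (defectSpace (star V))) := by
  have hdense : Dense (Submodule.span ℂ {x : K | ∃ (n : ℕ) (h : H), x = (V ^ n) (ι h)} : Set K) :=
    Submodule.dense_iff_topologicalClosure_eq_top.mpr hmin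
  have hV1 : ‖star V‖ ≤ 1 := norm_star V ▸ opNorm_le_one_of_norm_map hV
  have hintertwine : star V ∘L ι.toContinuousLinearMap = ι.toContinuousLinearMap ∘L star T :=
    adjoint_comp_eq_comp_adjoint_of_dilation hdil hdense
  have hnorm (x : H) :
      ‖defectOp (star T) x‖ = ‖(defectOp (star V) ∘L ι.toContinuousLinearMap) x‖ :=
    (norm_defectOp_apply_of_comp_eq (by rwa [norm_star]) hV1 ι hintertwine x).symm
  obtain ⟨e⟩ := LinearMap.nonempty_linearIsometryEquiv_topologicalClosure_range_of_norm_eq hnorm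
  exact ⟨e.trans (LinearIsometryEquiv.ofEq _ _ (topologicalClosure_range_comp_eq_of_comp_eq_zero
    (defectOp_star_comp_self_eq_zero hV) hdense))⟩
end
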